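/- arXiv:1006.3832 — 2 statements merged into one kernel-verified Lean document; each statement's English description precedes it below -/
import Mathlib

section
/- Let t > 0 be real and set q = e^{−t}. For x ∈ (0, t/2), define functions on ℤ by Ψ^{+,−}(x, v) = e^{−x} if v = 1, = −e^{−t/2} if v = 0, and = 0 otherwise; and Ψ^{−,+}(x, v) = 1 if v = 0, = −e^{−(t/2 − x)} if v = −1, and = 0 otherwise; and let Ψ(x, v) be the 2×2 matrix [[0, Ψ^{+,−}(x, v)], [Ψ^{−,+}(x, v), 0]]. Then for every x ∈ (0, t/2) and y ∈ ℝ, writing z = e^{−x + iy}, the (finitely supported) Fourier series satisfies Σ_{v ∈ ℤ} Ψ(x, v)·e^{ivy} = [[0, z − √q], [1 − √q/z, 0]], where √q = e^{−t/2}; i.e., the SYZ mirror transformation of Ψ equals the matrix factorization M₀ of W(z) = z + q/z with M₀² = (W(z) − W(√q))·Id₂. -/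
open scoped BigOperators

/-- `Ψ^{+,−}(x, v)` for the `ℙ¹` mirror: `e^{−x}` if `v = 1`, `−e^{−t/2}` if `v = 0`,
and `0` otherwise. -/
noncomputable def PsiPM (t x : ℝ) (v : ℤ) : ℂ :=
  if v = 1 then Real.exp (-x) else if v = 0 then -Real.exp (-(t / 2)) else 0

/-- `Ψ^{−,+}(x, v)` for the `ℙ¹` mirror: `1` if `v = 0`, `−e^{−(t/2 − x)}` if `v = −1`,
and `0` otherwise. -/
noncomputable def PsiMP (t x : ℝ) (v : ℤ) : ℂ :=
  if v = 0 then 1 else if v = -1 then -Real.exp (-(t / 2 - x)) else 0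

/-- The matrix-valued function `Ψ(x, v) = [[0, Ψ^{+,−}(x, v)], [Ψ^{−,+}(x, v), 0]]`. -/
noncomputable def PsiP1 (t x : ℝ) (v : ℤ) : Matrix (Fin 2) (Fin 2) ℂ :=
  !![0, PsiPM t x v; PsiMP t x v, 0]

/-! `Ψ(x, ·)` is supported on `{-1, 0, 1}`, so the Fourier series is a finite sum, computed
entrywise to `z − √q` and `1 − √q/z`. An antidiagonal `2 × 2` matrix squares to the product of
its entries times the identity, and since `q = (√q)²` that product is `W(z) − W(√q)`. -/

section Antidiagonal

variable {R : Type*} [CommRing R]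

theorem Matrix.antidiagonal_fin_two_sq (a b : R) :
    !![0, a; b, 0] ^ 2 = (a * b) • (1 : Matrix (Fin 2) (Fin 2) R) := by
  ext i j
  fin_cases i <;> fin_cases j <;> simp [sq, mul_comm]

theorem Matrix.sum_smul_antidiagonal_fin_two {ι : Type*} (s : Finset ι) (c a b : ι → R) :
    ∑ i ∈ s, c i • !![0, a i; b i, 0] = !![0, ∑ i ∈ s, c i * a i; ∑ i ∈ s, c i * b i, 0] := by
  ext i j
  fin_cases i <;> fin_cases j <;> simp [Matrix.sum_apply]

end Antidiagonal

theorem sub_mul_one_sub_div_eq {K : Type*} [Field K] {z : K} (hz : z ≠ 0) (s : K) :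
    (z - s) * (1 - s / z) = (z + s ^ 2 / z) - (s + s ^ 2 / s) := by
  field_simp
  ring

theorem support_PsiP1_subset (t x : ℝ) :
    Function.support (PsiP1 t x) ⊆ ({-1, 0, 1} : Finset ℤ) := by
  intro v hv
  contrapose! hv
  simp only [Finset.coe_insert, Finset.coe_singleton, Set.mem_insert_iff,
    Set.mem_singleton_iff, not_or] at hv
  obtain ⟨h₁, h₀, h₁'⟩ := hv
  simp [PsiP1, PsiPM, PsiMP, h₁, h₀, h₁', ← Matrix.ext_iff, Fin.forall_fin_two]

theorem sum_exp_mul_PsiPM (t x y : ℝ) :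
    ∑ v ∈ ({-1, 0, 1} : Finset ℤ), Complex.exp (v * y * Complex.I) * PsiPM t x v =
      Complex.exp (-x + y * Complex.I) - Real.exp (-(t / 2)) := by
  simp [PsiPM, Complex.ofReal_exp, ← Complex.exp_add]
  ring_nf

theorem sum_exp_mul_PsiMP (t x y : ℝ) :
    ∑ v ∈ ({-1, 0, 1} : Finset ℤ), Complex.exp (v * y * Complex.I) * PsiMP t x v =
      1 - Real.exp (-(t / 2)) / Complex.exp (-x + y * Complex.I) := by
  simp [PsiMP, Complex.ofReal_exp, ← Complex.exp_add, ← Complex.exp_sub]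
  ring_nf

theorem SYZ_transform_P1_general (t : ℝ) (x : ℝ)
    (y : ℝ) :
    letI z : ℂ := Complex.exp (-x + y * Complex.I)
    letI sq : ℂ := Real.exp (-(t / 2))
    letI q : ℂ := Real.exp (-t)
    letI M₀ : Matrix (Fin 2) (Fin 2) ℂ := !![0, z - sq; 1 - sq / z, 0]
    (∑ᶠ v : ℤ, Complex.exp (v * y * Complex.I) • PsiP1 t x v) = M₀ ∧
      M₀ ^ 2 = ((z + q / z) - (sq + q / sq)) • (1 : Matrix (Fin 2) (Fin 2) ℂ) := by
  have hq : (Real.exp (-t) : ℂ) = (Real.exp (-(t / 2)) : ℂ) ^ 2 := by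
    rw [← Complex.ofReal_pow, ← Real.exp_nat_mul]
    congr 2
    push_cast
    ring
  refine ⟨?_, ?_⟩
  · refine (finsum_eq_sum_of_support_subset (s := {-1, 0, 1}) _ ?_).trans ?_
    · exact (Function.support_smul_subset_right (fun v : ℤ => Complex.exp (v * y * Complex.I))
        (PsiP1 t x)).trans (support_PsiP1_subset t x)
    · simp only [PsiP1]
      rw [Matrix.sum_smul_antidiagonal_fin_two, sum_exp_mul_PsiPM, sum_exp_mul_PsiMP]
  · rw [Matrix.antidiagonal_fin_two_sq, hq, sub_mul_one_sub_div_eq (Complex.exp_ne_zero _)]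

/-- For `t > 0`, `q = e^{−t}`, `x ∈ (0, t/2)` and `y ∈ ℝ`, with
`z = e^{−x + iy}`, the fiberwise Fourier series (SYZ mirror transformation) of `Ψ`
equals `M₀ = [[0, z − √q], [1 − √q/z, 0]]` (where `√q = e^{−t/2}`), and `M₀` is a
matrix factorization of `W(z) = z + q/z` with `M₀² = (W(z) − W(√q))·Id₂`. -/
theorem SYZ_transform_P1 (t : ℝ) (ht : 0 < t) (x : ℝ) (hx : x ∈ Set.Ioo 0 (t / 2))
    (y : ℝ) :
    letI z : ℂ := Complex.exp (-x + y * Complex.I)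
    letI sq : ℂ := Real.exp (-(t / 2))
    letI q : ℂ := Real.exp (-t)
    letI M₀ : Matrix (Fin 2) (Fin 2) ℂ := !![0, z - sq; 1 - sq / z, 0]
    (∑ᶠ v : ℤ, Complex.exp (v * y * Complex.I) • PsiP1 t x v) = M₀ ∧
      M₀ ^ 2 = ((z + q / z) - (sq + q / sq)) • (1 : Matrix (Fin 2) (Fin 2) ℂ) :=
  SYZ_transform_P1_general t x y
end

section
/- Let c ∈ ℂ, q = c³, and z₁, z₂ ∈ ℂ \ {0}. Define the 2×2 matrices F = [[z₁ − c, z₂ − c²/z₁], [−(1 − c/z₂), 1 − c/z₁]] and G = [[1 − c/z₁, −(z₂ − c²/z₁)], [1 − c/z₂, z₁ − c]]. Then F·G = (z₁ + z₂ + q/(z₁z₂) − 3c)·Id₂ and G·F = (z₁ + z₂ + q/(z₁z₂) − 3c)·Id₂. -/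
/-! `G` is the adjugate of `F`, so `F * G = G * F = det F • 1`, and `det F` expands to
`W(z₁, z₂) - 3c` once `q = c³` is substituted. -/

open Matrix

theorem det_P2_block (c z₁ z₂ : ℂ) (hz₁ : z₁ ≠ 0) (hz₂ : z₂ ≠ 0) :
    det !![z₁ - c, z₂ - c ^ 2 / z₁; -(1 - c / z₂), 1 - c / z₁] =
      z₁ + z₂ + c ^ 3 / (z₁ * z₂) - 3 * c := by
  rw [det_fin_two_of]
  field_simp
  ring

theorem adjugate_P2_block (c z₁ z₂ : ℂ) :
    adjugate !![z₁ - c, z₂ - c ^ 2 / z₁; -(1 - c / z₂), 1 - c / z₁] =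
      !![1 - c / z₁, -(z₂ - c ^ 2 / z₁); 1 - c / z₂, z₁ - c] := by
  rw [adjugate_fin_two_of, neg_neg]

/-- For `c, z₁, z₂ : ℂ` with `z₁, z₂ ≠ 0` and `q = c³`, the 2×2 blocks
`F = [[z₁ − c, z₂ − c²/z₁], [−(1 − c/z₂), 1 − c/z₁]]` and
`G = [[1 − c/z₁, −(z₂ − c²/z₁)], [1 − c/z₂, z₁ − c]]` satisfy
`F·G = G·F = (z₁ + z₂ + q/(z₁z₂) − 3c)·Id₂`. -/
theorem block_factorization_P2 (c : ℂ) (z₁ z₂ : ℂ) (hz₁ : z₁ ≠ 0) (hz₂ : z₂ ≠ 0) :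
    letI q : ℂ := c ^ 3
    letI F : Matrix (Fin 2) (Fin 2) ℂ :=
      !![z₁ - c, z₂ - c ^ 2 / z₁; -(1 - c / z₂), 1 - c / z₁]
    letI G : Matrix (Fin 2) (Fin 2) ℂ :=
      !![1 - c / z₁, -(z₂ - c ^ 2 / z₁); 1 - c / z₂, z₁ - c]
    F * G = (z₁ + z₂ + q / (z₁ * z₂) - 3 * c) • (1 : Matrix (Fin 2) (Fin 2) ℂ) ∧
    G * F = (z₁ + z₂ + q / (z₁ * z₂) - 3 * c) • (1 : Matrix (Fin 2) (Fin 2) ℂ) := by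
  rw [← adjugate_P2_block, ← det_P2_block c z₁ z₂ hz₁ hz₂]
  exact ⟨mul_adjugate _, adjugate_mul _⟩
end
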